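/- Let x, z : Fin K → ℝ both be antitone, and suppose x majorizes z, i.e., Σ_{n < m} z_n ≤ Σ_{n < m} x_n for every m ≤ K with Σ_{n < K} z_n = Σ_{n < K} x_n. Then there exists a real orthogonal K×K matrix U such that for every k, (Uᵀ · (diagonal x) · U)_{kk} = z_k. -/

import Mathlib

/-!
Induction on `K`, splitting off one diagonal entry at a time by a plane rotation (the
T-transforms of Viswanath's construction). From `z 0 ≤ x 0` and `z 0 ≥ mean z = mean x` there is
a first index `r ≥ 1` with `x r ≤ z 0`. The Givens rotation in the plane `(0, r)` with
`c² x 0 + s² x r = z 0` puts `z 0` in the corner and leaves on the other coordinates the diagonal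
matrix of `y`, which is `x` with `x 0` dropped and `x r` replaced by `x 0 + x r - z 0`. The prefix
sums of `y` dominate those of the tail of `z`: below `r` termwise, since `x i > z 0 ≥ z i` by
minimality of `r`, and from `r` on because they are those of `x` minus `z 0`. Only this prefix-sum
domination is carried through the induction, so `y` need not be sorted.
-/

open Matrix Finset

section Givens

variable {n R : Type*} [DecidableEq n] [CommRing R] {a b : n} {c s : R}

def givensRotation (a b : n) (c s : R) : Matrix n n R := of fun i j =>
  if j = a then (if i = a then c else if i = b then s else 0)
  else if j = b then (if i = a then -s else if i = b then c else 0)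
  else if i = j then 1 else 0

lemma givensRotation_apply_of_ne_right {p : n} (hpa : p ≠ a) (hpb : p ≠ b) (i : n) :
    givensRotation a b c s i p = (1 : Matrix n n R) i p := by
  simp [givensRotation, hpa, hpb, one_apply]

lemma givensRotation_apply_of_ne_left {p : n} (hpa : p ≠ a) (hpb : p ≠ b) (j : n) :
    givensRotation a b c s p j = (1 : Matrix n n R) p j := by
  by_cases hja : j = a
  · simp [givensRotation, hja, hpa, hpb]
  · by_cases hjb : j = b <;> simp [givensRotation, hja, hjb, hpa, hpb, one_apply]

variable [Fintype n]

lemma transpose_mul_diagonal_mul_apply (A : Matrix n n R) (x : n → R) (p q : n) :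
    (Aᵀ * diagonal x * A) p q = ∑ i, x i * A i p * A i q := by
  rw [Matrix.mul_apply]
  simp only [mul_diagonal, transpose_apply]
  exact Finset.sum_congr rfl fun i _ => by ring

lemma sum_mul_givensRotation_mul_of_ne (f : n → R) {p : n} (hpa : p ≠ a) (hpb : p ≠ b)
    (q : n) :
    ∑ i, f i * givensRotation a b c s i p * givensRotation a b c s i q =
      f p * (1 : Matrix n n R) p q := by
  simp [givensRotation_apply_of_ne_right hpa hpb, givensRotation_apply_of_ne_left hpa hpb,
    one_apply]

lemma sum_mul_givensRotation_mul (hab : a ≠ b) (f : n → R) {p : n} (hp : p = a ∨ p = b)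
    (q : n) :
    ∑ i, f i * givensRotation a b c s i p * givensRotation a b c s i q =
      f a * givensRotation a b c s a p * givensRotation a b c s a q +
      f b * givensRotation a b c s b p * givensRotation a b c s b q := by
  refine Fintype.sum_eq_add a b hab fun i ⟨hia, hib⟩ => ?_
  rcases hp with rfl | rfl <;> simp [givensRotation, hia, hib]

lemma givensRotation_transpose_mul_self (hab : a ≠ b) (h : c ^ 2 + s ^ 2 = 1) :
    (givensRotation a b c s)ᵀ * givensRotation a b c s = 1 := by
  ext p q
  rw [show (givensRotation a b c s)ᵀ * givensRotation a b c s =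
      (givensRotation a b c s)ᵀ * diagonal 1 * givensRotation a b c s by simp,
    transpose_mul_diagonal_mul_apply]
  by_cases hp : p = a ∨ p = b
  · rw [sum_mul_givensRotation_mul hab _ hp]
    by_cases hq : q = a ∨ q = b
    · rcases hp with rfl | rfl <;> rcases hq with rfl | rfl <;>
        simp [givensRotation, hab, hab.symm] <;> first | linear_combination h | ring
    · push Not at hq
      rcases hp with rfl | rfl <;>
        simp [givensRotation, hq.1, hq.2, hq.1.symm, hq.2.symm, one_apply]
  · push Not at hp
    rw [sum_mul_givensRotation_mul_of_ne _ hp.1 hp.2]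
    simp

lemma givensRotation_conj_diagonal_apply_left (hab : a ≠ b) (x : n → R) :
    ((givensRotation a b c s)ᵀ * diagonal x * givensRotation a b c s) a a =
      c ^ 2 * x a + s ^ 2 * x b := by
  rw [transpose_mul_diagonal_mul_apply, sum_mul_givensRotation_mul hab _ (.inl rfl)]
  simp [givensRotation, hab.symm]
  ring

lemma givensRotation_conj_diagonal_apply_of_ne (hab : a ≠ b) (x : n → R) {p q : n}
    (hpa : p ≠ a) (hqa : q ≠ a) :
    ((givensRotation a b c s)ᵀ * diagonal x * givensRotation a b c s) p q =
      diagonal (Function.update x b (s ^ 2 * x a + c ^ 2 * x b)) p q := by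
  rw [transpose_mul_diagonal_mul_apply]
  by_cases hpb : p = b
  · subst hpb
    rw [sum_mul_givensRotation_mul hab _ (.inr rfl)]
    by_cases hqp : q = p
    · subst hqp
      simp [givensRotation, hab.symm]
      ring
    · simp [givensRotation, hab.symm, hqa, hqa.symm, hqp, Ne.symm hqp]
  · rw [sum_mul_givensRotation_mul_of_ne _ hpa hpb]
    simp [diagonal_apply, one_apply, hpb]

end Givens

section OneBlockDiagonal

variable {R : Type*} [CommSemiring R] {k : ℕ}

def oneBlockDiagonal (W : Matrix (Fin k) (Fin k) R) : Matrix (Fin (k + 1)) (Fin (k + 1)) R :=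
  of (Fin.cons (Fin.cons 1 0) fun i => Fin.cons 0 (W i))

variable (W : Matrix (Fin k) (Fin k) R)

@[simp] lemma oneBlockDiagonal_zero_zero : oneBlockDiagonal W 0 0 = 1 := rfl
@[simp] lemma oneBlockDiagonal_zero_succ (j : Fin k) : oneBlockDiagonal W 0 j.succ = 0 := rfl
@[simp] lemma oneBlockDiagonal_succ_zero (i : Fin k) : oneBlockDiagonal W i.succ 0 = 0 := rfl
@[simp] lemma oneBlockDiagonal_succ_succ (i j : Fin k) :
    oneBlockDiagonal W i.succ j.succ = W i j := rfl

lemma oneBlockDiagonal_transpose_mul_self (hW : Wᵀ * W = 1) :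
    (oneBlockDiagonal W)ᵀ * oneBlockDiagonal W = 1 := by
  ext p q
  cases p using Fin.cases <;> cases q using Fin.cases <;>
    simp [Matrix.mul_apply, Fin.sum_univ_succ, one_apply, Fin.succ_ne_zero,
      (Fin.succ_ne_zero _).symm]
  case succ.succ i j => simpa [Matrix.mul_apply, one_apply] using congrFun (congrFun hW i) j

lemma oneBlockDiagonal_conj_zero_zero (A : Matrix (Fin (k + 1)) (Fin (k + 1)) R) :
    ((oneBlockDiagonal W)ᵀ * A * oneBlockDiagonal W) 0 0 = A 0 0 := by
  simp [Matrix.mul_apply, Fin.sum_univ_succ]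

lemma oneBlockDiagonal_conj_succ_succ (A : Matrix (Fin (k + 1)) (Fin (k + 1)) R) (i j : Fin k) :
    ((oneBlockDiagonal W)ᵀ * A * oneBlockDiagonal W) i.succ j.succ =
      (Wᵀ * A.submatrix Fin.succ Fin.succ * W) i j := by
  simp [Matrix.mul_apply, Fin.sum_univ_succ]

end OneBlockDiagonal

def IsDiagOfOrthogonalConj {n : Type*} [Fintype n] [DecidableEq n] (x z : n → ℝ) : Prop :=
  ∃ U : Matrix n n ℝ, Uᵀ * U = 1 ∧ ∀ k, (Uᵀ * diagonal x * U) k k = z k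

lemma IsDiagOfOrthogonalConj.refl {n : Type*} [Fintype n] [DecidableEq n] (x : n → ℝ) :
    IsDiagOfOrthogonalConj x x :=
  ⟨1, by simp, fun k => by simp⟩

lemma IsDiagOfOrthogonalConj.cons_of_rotation {k : ℕ} {x : Fin (k + 2) → ℝ} {r : Fin (k + 1)}
    {c s : ℝ} (hcs : c ^ 2 + s ^ 2 = 1) {w : Fin (k + 1) → ℝ}
    (h : IsDiagOfOrthogonalConj
      (Function.update (Fin.tail x) r (s ^ 2 * x 0 + c ^ 2 * x r.succ)) w) :
    IsDiagOfOrthogonalConj x (Fin.cons (c ^ 2 * x 0 + s ^ 2 * x r.succ) w) := by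
  obtain ⟨W, hW, hWx⟩ := h
  have h0r : (0 : Fin (k + 2)) ≠ r.succ := (Fin.succ_ne_zero r).symm
  set G := givensRotation 0 r.succ c s
  have hG : Gᵀ * G = 1 := givensRotation_transpose_mul_self h0r hcs
  have hGx : (Gᵀ * diagonal x * G).submatrix Fin.succ Fin.succ =
      diagonal (Function.update (Fin.tail x) r (s ^ 2 * x 0 + c ^ 2 * x r.succ)) := by
    rw [← Fin.tail_update_succ, Fin.tail_def, ← Function.comp_def,
      ← submatrix_diagonal _ _ (Fin.succ_injective _)]
    ext p q
    exact givensRotation_conj_diagonal_apply_of_ne h0r _ (Fin.succ_ne_zero p)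
      (Fin.succ_ne_zero q)
  refine ⟨G * oneBlockDiagonal W, ?_, fun i => ?_⟩
  · rw [transpose_mul, Matrix.mul_assoc, ← Matrix.mul_assoc Gᵀ, hG, Matrix.one_mul,
      oneBlockDiagonal_transpose_mul_self W hW]
  · rw [show (G * oneBlockDiagonal W)ᵀ * diagonal x * (G * oneBlockDiagonal W) =
        (oneBlockDiagonal W)ᵀ * (Gᵀ * diagonal x * G) * oneBlockDiagonal W by
      simp only [transpose_mul, Matrix.mul_assoc]]
    cases i using Fin.cases with
    | zero =>
      rw [oneBlockDiagonal_conj_zero_zero, givensRotation_conj_diagonal_apply_left h0r]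
      rfl
    | succ i =>
      rw [oneBlockDiagonal_conj_succ_succ, hGx, hWx]
      rfl

lemma exists_sq_add_sq_eq_one_of_mem_Icc {a b t : ℝ} (ht : t ∈ Set.Icc b a) :
    ∃ c s : ℝ, c ^ 2 + s ^ 2 = 1 ∧ c ^ 2 * a + s ^ 2 * b = t := by
  obtain ⟨p, q, hp, hq, hpq, hpqt⟩ := Icc_subset_segment (𝕜 := ℝ) ht
  refine ⟨√q, √p, ?_, ?_⟩ <;> rw [Real.sq_sqrt hp, Real.sq_sqrt hq]
  · linarith
  · simp only [smul_eq_mul] at hpqt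
    linarith

lemma Finset.sum_update_of_mem_eq_sum_add_sub {ι M : Type*} [DecidableEq ι] [AddCommGroup M]
    {s : Finset ι} {i : ι} (h : i ∈ s) (f : ι → M) (b : M) :
    ∑ j ∈ s, Function.update f i b j = ∑ j ∈ s, f j + (b - f i) := by
  rw [sum_update_of_mem h, sum_eq_add_sum_sdiff_singleton_of_mem h]
  abel

def prefixSum {M : Type*} [AddCommMonoid M] {K : ℕ} (f : Fin K → M) (m : ℕ) : M :=
  ∑ n ∈ univ.filter (fun n : Fin K => (n : ℕ) < m), f n

lemma prefixSum_succ {M : Type*} [AddCommMonoid M] {K : ℕ} (f : Fin (K + 1) → M) (m : ℕ) :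
    prefixSum f (m + 1) = f 0 + prefixSum (Fin.tail f) m := by
  simp [prefixSum, Finset.sum_filter, Fin.sum_univ_succ, Fin.tail]

lemma prefixSum_one {M : Type*} [AddCommMonoid M] {K : ℕ} (f : Fin (K + 1) → M) :
    prefixSum f 1 = f 0 := by
  simpa [prefixSum] using prefixSum_succ f 0

section Step

variable {k : ℕ} {x z : Fin (k + 2) → ℝ}

lemma exists_first_succ_le (hz : Antitone z) (h0 : z 0 ≤ x 0) (hsum : ∑ n, z n = ∑ n, x n) :
    ∃ r : Fin (k + 1), x r.succ ≤ z 0 ∧ ∀ i < r, z 0 < x i.succ := by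
  have hne : {r : Fin (k + 1) | x r.succ ≤ z 0}.Nonempty := by
    by_contra! h
    have htail : ∑ i : Fin (k + 1), z i.succ < ∑ i : Fin (k + 1), x i.succ :=
      Finset.sum_lt_sum_of_nonempty univ_nonempty fun i _ =>
        (hz (Fin.zero_le i.succ)).trans_lt (not_le.1 fun hi => h.subset hi)
    rw [Fin.sum_univ_succ z, Fin.sum_univ_succ x] at hsum
    linarith
  obtain ⟨r, hr, hmin⟩ := wellFounded_lt.has_min _ hne
  exact ⟨r, hr, fun i hi => not_le.1 fun h => hmin i h hi⟩

lemma prefixSum_tail_le_update (hz : Antitone z)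
    (hmaj : ∀ m ≤ k + 2, prefixSum z m ≤ prefixSum x m) {r : Fin (k + 1)}
    (hmin : ∀ i < r, z 0 < x i.succ) {m : ℕ} (hm : m ≤ k + 1) :
    prefixSum (Fin.tail z) m ≤
      prefixSum (Function.update (Fin.tail x) r (x 0 + x r.succ - z 0)) m := by
  by_cases hrm : (r : ℕ) < m
  · have hmaj' := hmaj (m + 1) (by omega)
    rw [prefixSum_succ, prefixSum_succ] at hmaj'
    unfold prefixSum at hmaj' ⊢
    rw [sum_update_of_mem_eq_sum_add_sub (by simpa using hrm)]
    simp only [Fin.tail] at hmaj' ⊢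
    linarith
  · unfold prefixSum
    rw [sum_update_of_notMem (by simpa using hrm)]
    refine Finset.sum_le_sum fun i hi => ?_
    have hir : i < r := Fin.lt_def.2 (by simp at hi; omega)
    exact (hz (Fin.zero_le i.succ)).trans (hmin i hir).le

lemma sum_update_tail_eq_sum_tail (hsum : ∑ n, z n = ∑ n, x n) (r : Fin (k + 1)) :
    ∑ n, Function.update (Fin.tail x) r (x 0 + x r.succ - z 0) n = ∑ n, Fin.tail z n := by
  rw [sum_update_of_mem_eq_sum_add_sub (mem_univ r)]
  rw [Fin.sum_univ_succ z, Fin.sum_univ_succ x] at hsum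
  simp only [Fin.tail] at hsum ⊢
  linarith

end Step

theorem majorization_orthogonal_diagonal_general (K : ℕ) (x z : Fin K → ℝ)
    (hz : Antitone z)
    (hmaj : ∀ m ≤ K, ∑ n ∈ Finset.univ.filter (fun n : Fin K => (n : ℕ) < m), z n ≤
        ∑ n ∈ Finset.univ.filter (fun n : Fin K => (n : ℕ) < m), x n)
    (hsum : ∑ n : Fin K, z n = ∑ n : Fin K, x n) :
    ∃ U : Matrix (Fin K) (Fin K) ℝ, Uᵀ * U = 1 ∧
      ∀ k, (Uᵀ * Matrix.diagonal x * U) k k = z k := by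
  induction K with
  | zero => exact ⟨1, by simp, fun k => k.elim0⟩
  | succ K ih =>
    cases K with
    | zero =>
      obtain rfl : z = x := funext fun i => by simpa [Fin.fin_one_eq_zero i] using hsum
      exact IsDiagOfOrthogonalConj.refl z
    | succ k =>
      have h0 : z 0 ≤ x 0 := by
        rw [← prefixSum_one z, ← prefixSum_one x]
        exact hmaj 1 (by omega)
      obtain ⟨r, hr, hmin⟩ := exists_first_succ_le hz h0 hsum
      obtain ⟨c, s, hcs, hc⟩ := exists_sq_add_sq_eq_one_of_mem_Icc ⟨hr, h0⟩
      have hy : s ^ 2 * x 0 + c ^ 2 * x r.succ = x 0 + x r.succ - z 0 := by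
        linear_combination (x 0 + x r.succ) * hcs - hc
      have htail := ih _ (Fin.tail z) (hz.comp_monotone Fin.strictMono_succ.monotone)
        (fun m hm => prefixSum_tail_le_update hz hmaj hmin hm)
        (sum_update_tail_eq_sum_tail hsum r).symm
      rw [← hy] at htail
      have hx := IsDiagOfOrthogonalConj.cons_of_rotation hcs htail
      rwa [hc, Fin.cons_self_tail] at hx

/-- If `x` majorizes `z` (both antitone), then there exists a real orthogonal matrix `U`
such that the diagonal of `Uᵀ * diagonal x * U` is `z` (Schur–Horn / Viswanath's
construction from T-transforms). -/
theorem majorization_orthogonal_diagonal (K : ℕ) (x z : Fin K → ℝ)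
    (hx : Antitone x) (hz : Antitone z)
    (hmaj : ∀ m ≤ K, ∑ n ∈ Finset.univ.filter (fun n : Fin K => (n : ℕ) < m), z n ≤
        ∑ n ∈ Finset.univ.filter (fun n : Fin K => (n : ℕ) < m), x n)
    (hsum : ∑ n : Fin K, z n = ∑ n : Fin K, x n) :
    ∃ U : Matrix (Fin K) (Fin K) ℝ, Uᵀ * U = 1 ∧
      ∀ k, (Uᵀ * Matrix.diagonal x * U) k k = z k :=
  majorization_orthogonal_diagonal_general K x z hz hmaj hsum
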